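/- Let A : S → Set. The endofunctor Â weakly preserves pullbacks if and only if A satisfies condition (WPB): for every pullback square in the category of finite sets consisting of surjections g_2 : Fin p → Fin m, f_2 : Fin p → Fin n, f_1 : Fin m → Fin k, g_1 : Fin n → Fin k, and elements a ∈ A(m), b ∈ A(n) with A(f_1)(a) = A(g_1)(b), there exist an injection h : Fin q → Fin p and c ∈ A(q) such that f_2 ∘ h and g_2 ∘ h are surjections, A(g_2 ∘ h)(c) = a, and A(f_2 ∘ h)(c) = b. -/
import Mathlib


/-- A functor from the skeleton `S` of finite sets and surjections to `Set`:
a family of sets with a functorial action of surjections. -/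
structure SFunctor where
  obj : ℕ → Type
  map : ∀ {n m : ℕ} (f : Fin n → Fin m), Function.Surjective f → obj n → obj m
  map_id : ∀ {n : ℕ} (a : obj n), map id Function.surjective_id a = a
  map_map : ∀ {n m k : ℕ} (f : Fin n → Fin m) (hf : Function.Surjective f)
      (g : Fin m → Fin k) (hg : Function.Surjective g) (a : obj n),
      map g hg (map f hf a) = map (g ∘ f) (hg.comp hf) a

/-- The relation identifying `(x⃗ ∘ σ, a)` with `(x⃗, σ · a)` for bijections `σ`,
on pairs of an injection `Fin n → X` and an element of `A(n)`. -/
def HatRel (A : SFunctor) (X : Type) :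
    (Σ n : ℕ, {x : Fin n → X // Function.Injective x} × A.obj n) →
    (Σ n : ℕ, {x : Fin n → X // Function.Injective x} × A.obj n) → Prop :=
  fun p q => ∃ e : Fin p.1 ≃ Fin q.1,
    (∀ i, q.2.1.1 (e i) = p.2.1.1 i) ∧ A.map e e.surjective p.2.2 = q.2.2

/-- `Â(X) = Σ_n [X over n] ⊗_{S_n} A(n)`. -/
def HatA (A : SFunctor) (X : Type) : Type := Quot (HatRel A X)

/-- The class `[x⃗, a]` in `Â(X)`. -/
def hatMk (A : SFunctor) {X : Type} {n : ℕ} (x : Fin n → X) (hx : Function.Injective x)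
    (a : A.obj n) : HatA A X :=
  Quot.mk _ ⟨n, ⟨x, hx⟩, a⟩

/-- The characterizing property of the action of `Â` on functions:
`Â(f)([x⃗,a]) = [y⃗, A(α)(a)]` whenever `f ∘ x⃗ = y⃗ ∘ α` is an epi-mono factorization. -/
def HatMapSpec (A : SFunctor)
    (F : ∀ (X Y : Type), (X → Y) → HatA A X → HatA A Y) : Prop :=
  ∀ (X Y : Type) (f : X → Y) (n m : ℕ) (x : Fin n → X) (hx : Function.Injective x)
    (a : A.obj n) (α : Fin n → Fin m) (hα : Function.Surjective α)
    (y : Fin m → Y) (hy : Function.Injective y),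
    (∀ i, f (x i) = y (α i)) →
    F X Y f (hatMk A x hx a) = hatMk A y hy (A.map α hα a)

/-- A commutative square of sets which is a pullback (elementwise formulation). -/
def IsSetPullback {P A B C : Type} (pa : P → A) (pb : P → B) (f : A → C) (g : B → C) : Prop :=
  (∀ p, f (pa p) = g (pb p)) ∧ ∀ a b, f a = g b → ∃! p, pa p = a ∧ pb p = b

/-- A commutative square of sets which is a weak pullback (elementwise formulation). -/
def IsWeakSetPullback {P A B C : Type} (pa : P → A) (pb : P → B) (f : A → C) (g : B → C) : Prop :=
  (∀ p, f (pa p) = g (pb p)) ∧ ∀ a b, f a = g b → ∃ p, pa p = a ∧ pb p = b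

/-- Naturality of a family `τ n : A(n) → B(n)` with respect to surjections. -/
def SNatTrans (A B : SFunctor) (τ : ∀ n, A.obj n → B.obj n) : Prop :=
  ∀ (n m : ℕ) (f : Fin n → Fin m) (hf : Function.Surjective f) (a : A.obj n),
    τ m (A.map f hf a) = B.map f hf (τ n a)

/-- The characterizing property of `τ̂ : Â → B̂`, namely `τ̂_X([x⃗,a]) = [x⃗, τ(a)]`. -/
def HatTransSpec (A B : SFunctor) (τ : ∀ n, A.obj n → B.obj n)
    (t : ∀ X : Type, HatA A X → HatA B X) : Prop :=
  ∀ (X : Type) (n : ℕ) (x : Fin n → X) (hx : Function.Injective x) (a : A.obj n),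
    t X (hatMk A x hx a) = hatMk B x hx (τ n a)

theorem SFunctor.map_congr (A : SFunctor) {n m : ℕ} {f g : Fin n → Fin m}
    (h : f = g) (hf : Function.Surjective f) (hg : Function.Surjective g) (a : A.obj n) :
    A.map f hf a = A.map g hg a := by subst h; rfl

theorem hatRel_equivalence (A : SFunctor) (X : Type) : Equivalence (HatRel A X) := by
  constructor
  · intro p
    exact ⟨Equiv.refl _, fun i => rfl, A.map_id _⟩
  · rintro ⟨np, ⟨xp, hxp⟩, ap⟩ ⟨nq, ⟨xq, hxq⟩, aq⟩ ⟨e, h1, h2⟩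
    refine ⟨e.symm, fun i => ?_, ?_⟩
    · rw [← h1 (e.symm i), Equiv.apply_symm_apply]
    · rw [← h2, A.map_map]
      rw [A.map_congr (show (⇑e.symm ∘ ⇑e) = id from e.symm_comp_self) _ Function.surjective_id]
      exact A.map_id _
  · rintro ⟨np, ⟨xp, hxp⟩, ap⟩ ⟨nq, ⟨xq, hxq⟩, aq⟩ ⟨nr, ⟨xr, hxr⟩, ar⟩ ⟨e, h1, h2⟩ ⟨e', h1', h2'⟩
    refine ⟨e.trans e', fun i => ?_, ?_⟩
    · exact (h1' (e i)).trans (h1 i)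
    · rw [← h2', ← h2, A.map_map]
      exact A.map_congr (Equiv.coe_trans e e').symm _ _ _

theorem hatMk_exact {A : SFunctor} {X : Type} {n m : ℕ} {x : Fin n → X}
    {hx : Function.Injective x} {a : A.obj n}
    {y : Fin m → X} {hy : Function.Injective y} {b : A.obj m}
    (h : hatMk A x hx a = hatMk A y hy b) :
    HatRel A X ⟨n, ⟨x, hx⟩, a⟩ ⟨m, ⟨y, hy⟩, b⟩ :=
  (hatRel_equivalence A X).eqvGen_iff.mp (Quot.eqvGen_exact h)

theorem exists_factorization {q : ℕ} {X : Type} (u : Fin q → X) :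
    ∃ (r : ℕ) (α : Fin q → Fin r) (y : Fin r → X),
      Function.Surjective α ∧ Function.Injective y ∧ ∀ i, u i = y (α i) := by
  classical
  haveI : Fintype (Set.range u) := Set.fintypeRange u
  let e := Fintype.equivFin (Set.range u)
  refine ⟨Fintype.card (Set.range u), fun i => e ⟨u i, Set.mem_range_self i⟩,
    fun j => (e.symm j : X), ?_, ?_, ?_⟩
  · intro j
    obtain ⟨i, hi⟩ := (e.symm j).2
    refine ⟨i, ?_⟩
    show e ⟨u i, Set.mem_range_self i⟩ = j
    rw [show (⟨u i, Set.mem_range_self i⟩ : Set.range u) = e.symm j from Subtype.ext hi,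
      Equiv.apply_symm_apply]
  · intro j1 j2 h
    exact e.symm.injective (Subtype.ext h)
  · intro i
    show u i = ↑(e.symm (e ⟨u i, Set.mem_range_self i⟩))
    rw [Equiv.symm_apply_apply]

theorem factor_unique {q r r' : ℕ} {X : Type} (α : Fin q → Fin r) (y : Fin r → X)
    (α' : Fin q → Fin r') (y' : Fin r' → X)
    (hα : Function.Surjective α) (hy : Function.Injective y)
    (hα' : Function.Surjective α') (hy' : Function.Injective y')
    (h : ∀ i, y (α i) = y' (α' i)) :
    ∃ e : Fin r ≃ Fin r', (∀ j, y' (e j) = y j) ∧ ∀ i, e (α i) = α' i := by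
  classical
  have hex : ∀ j : Fin r, ∃ j', y' j' = y j := by
    intro j
    obtain ⟨i, rfl⟩ := hα j
    exact ⟨α' i, (h i).symm⟩
  choose φ hφ using hex
  have hinj : Function.Injective φ := fun j1 j2 hj => hy (by rw [← hφ j1, ← hφ j2, hj])
  have hsur : Function.Surjective φ := by
    intro j'
    obtain ⟨i, rfl⟩ := hα' j'
    exact ⟨α i, hy' (by rw [hφ, h])⟩
  refine ⟨Equiv.ofBijective φ ⟨hinj, hsur⟩, fun j => hφ j, fun i => hy' ?_⟩
  rw [show (Equiv.ofBijective φ ⟨hinj, hsur⟩) (α i) = φ (α i) from rfl, hφ, h]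


theorem hat_comm (A : SFunctor) (F : ∀ (X Y : Type), (X → Y) → HatA A X → HatA A Y)
    (hF : HatMapSpec A F) {P Y Z X : Type}
    (p1 : P → Y) (p2 : P → Z) (f : Y → X) (g : Z → X)
    (hcomm : ∀ p, f (p1 p) = g (p2 p)) (w : HatA A P) :
    F Y X f (F P Y p1 w) = F Z X g (F P Z p2 w) := by
  obtain ⟨⟨q, ⟨pv, hpv⟩, c⟩, rfl⟩ := Quot.exists_rep w
  obtain ⟨r1, α1, y1, hα1, hy1, hfac1⟩ := exists_factorization (p1 ∘ pv)
  obtain ⟨r2, α2, y2, hα2, hy2, hfac2⟩ := exists_factorization (p2 ∘ pv)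
  obtain ⟨s1, β1, x1, hβ1, hx1, hfac1'⟩ := exists_factorization (f ∘ y1)
  obtain ⟨s2, β2, x2, hβ2, hx2, hfac2'⟩ := exists_factorization (g ∘ y2)
  have E1 : F Y X f (F P Y p1 (hatMk A pv hpv c))
      = hatMk A x1 hx1 (A.map β1 hβ1 (A.map α1 hα1 c)) := by
    rw [hF P Y p1 q r1 pv hpv c α1 hα1 y1 hy1 (fun i => hfac1 i)]
    exact hF Y X f r1 s1 y1 hy1 _ β1 hβ1 x1 hx1 (fun i => hfac1' i)
  have E2 : F Z X g (F P Z p2 (hatMk A pv hpv c))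
      = hatMk A x2 hx2 (A.map β2 hβ2 (A.map α2 hα2 c)) := by
    rw [hF P Z p2 q r2 pv hpv c α2 hα2 y2 hy2 (fun i => hfac2 i)]
    exact hF Z X g r2 s2 y2 hy2 _ β2 hβ2 x2 hx2 (fun i => hfac2' i)
  obtain ⟨e, he1, he2⟩ := factor_unique (β1 ∘ α1) x1 (β2 ∘ α2) x2
    (hβ1.comp hα1) hx1 (hβ2.comp hα2) hx2 (fun i => by
      show x1 (β1 (α1 i)) = x2 (β2 (α2 i))
      rw [← hfac1' (α1 i), ← hfac2' (α2 i)]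
      show f (y1 (α1 i)) = g (y2 (α2 i))
      rw [← hfac1 i, ← hfac2 i]
      exact hcomm (pv i))
  refine E1.trans (Eq.trans ?_ E2.symm)
  apply Quot.sound
  refine ⟨e, he1, ?_⟩
  show A.map ⇑e e.surjective (A.map β1 hβ1 (A.map α1 hα1 c)) = A.map β2 hβ2 (A.map α2 hα2 c)
  rw [A.map_map, A.map_map, A.map_map]
  exact A.map_congr (by rw [Function.comp_assoc]; exact funext he2) _ _ _



theorem exists_fin_pullback {m n k : ℕ} (f1 : Fin m → Fin k) (g1 : Fin n → Fin k)
    (hf1 : Function.Surjective f1) (hg1 : Function.Surjective g1) :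
    ∃ (p : ℕ) (g2 : Fin p → Fin m) (f2 : Fin p → Fin n),
      Function.Surjective g2 ∧ Function.Surjective f2 ∧ IsSetPullback g2 f2 f1 g1 := by
  classical
  let Q := {ij : Fin m × Fin n // f1 ij.1 = g1 ij.2}
  let eQ : Q ≃ Fin (Fintype.card Q) := Fintype.equivFin Q
  refine ⟨Fintype.card Q, fun i => (eQ.symm i).1.1, fun i => (eQ.symm i).1.2, ?_, ?_, ?_, ?_⟩
  · intro i
    obtain ⟨j, hj⟩ := hg1 (f1 i)
    refine ⟨eQ ⟨(i, j), hj.symm⟩, ?_⟩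
    show (eQ.symm (eQ ⟨(i, j), hj.symm⟩)).1.1 = i
    rw [Equiv.symm_apply_apply]
  · intro j
    obtain ⟨i, hi⟩ := hf1 (g1 j)
    refine ⟨eQ ⟨(i, j), hi⟩, ?_⟩
    show (eQ.symm (eQ ⟨(i, j), hi⟩)).1.2 = j
    rw [Equiv.symm_apply_apply]
  · intro i
    exact (eQ.symm i).2
  · intro i j hij
    refine ⟨eQ ⟨(i, j), hij⟩, ⟨?_, ?_⟩, ?_⟩
    · show (eQ.symm (eQ ⟨(i, j), hij⟩)).1.1 = i
      rw [Equiv.symm_apply_apply]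
    · show (eQ.symm (eQ ⟨(i, j), hij⟩)).1.2 = j
      rw [Equiv.symm_apply_apply]
    · rintro w ⟨hw1, hw2⟩
      have hw : eQ.symm w = ⟨(i, j), hij⟩ := Subtype.ext (Prod.ext hw1 hw2)
      rw [← Equiv.apply_symm_apply eQ w, hw]


/-- `Â` weakly preserves pullbacks iff `A` satisfies condition (WPB):
for every pullback square of surjections of finite sets and every compatible pair of
elements there is an injection `h` and an element `c` with the two composites with `h`
surjective, mapping `c` to the given pair. -/
theorem hat_weakly_preserves_pullbacks_iff_WPB (A : SFunctor)
    (F : ∀ (X Y : Type), (X → Y) → HatA A X → HatA A Y) (hF : HatMapSpec A F) :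
    (∀ (P Y Z X : Type) (p1 : P → Y) (p2 : P → Z) (f : Y → X) (g : Z → X),
      IsSetPullback p1 p2 f g →
      IsWeakSetPullback (F P Y p1) (F P Z p2) (F Y X f) (F Z X g)) ↔
    (∀ (p m n k : ℕ) (g2 : Fin p → Fin m) (f2 : Fin p → Fin n)
      (f1 : Fin m → Fin k) (g1 : Fin n → Fin k),
      Function.Surjective g2 → Function.Surjective f2 →
      ∀ (hf1 : Function.Surjective f1) (hg1 : Function.Surjective g1),
      IsSetPullback g2 f2 f1 g1 →
      ∀ (a : A.obj m) (b : A.obj n), A.map f1 hf1 a = A.map g1 hg1 b →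
      ∃ (q : ℕ) (h : Fin q → Fin p) (c : A.obj q),
        Function.Injective h ∧
        ∃ (hgh : Function.Surjective (g2 ∘ h)) (hfh : Function.Surjective (f2 ∘ h)),
          A.map (g2 ∘ h) hgh c = a ∧ A.map (f2 ∘ h) hfh c = b) := by
  constructor
  · intro H p m n k g2 f2 f1 g1 hg2 hf2 hf1 hg1 hpb a b hab
    have HW := H (Fin p) (Fin m) (Fin n) (Fin k) g2 f2 f1 g1 hpb
    have h1 : F (Fin m) (Fin k) f1 (hatMk A id Function.injective_id a)
        = hatMk A id Function.injective_id (A.map f1 hf1 a) :=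
      hF _ _ f1 m k id Function.injective_id a f1 hf1 id Function.injective_id (fun _ => rfl)
    have h2 : F (Fin n) (Fin k) g1 (hatMk A id Function.injective_id b)
        = hatMk A id Function.injective_id (A.map g1 hg1 b) :=
      hF _ _ g1 n k id Function.injective_id b g1 hg1 id Function.injective_id (fun _ => rfl)
    obtain ⟨w, hw1, hw2⟩ := HW.2 _ _ (by rw [h1, h2, hab])
    obtain ⟨⟨q, ⟨h, hh⟩, c⟩, rfl⟩ := Quot.exists_rep w
    obtain ⟨r1, α1, y1, hα1, hy1, hfac1⟩ := exists_factorization (g2 ∘ h)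
    obtain ⟨r2, α2, y2, hα2, hy2, hfac2⟩ := exists_factorization (f2 ∘ h)
    have e1 : F (Fin p) (Fin m) g2 (hatMk A h hh c) = hatMk A y1 hy1 (A.map α1 hα1 c) :=
      hF _ _ g2 q r1 h hh c α1 hα1 y1 hy1 (fun i => hfac1 i)
    have e2 : F (Fin p) (Fin n) f2 (hatMk A h hh c) = hatMk A y2 hy2 (A.map α2 hα2 c) :=
      hF _ _ f2 q r2 h hh c α2 hα2 y2 hy2 (fun i => hfac2 i)
    obtain ⟨eq1, heq1, heq1'⟩ := hatMk_exact (e1.symm.trans hw1)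
    obtain ⟨eq2, heq2, heq2'⟩ := hatMk_exact (e2.symm.trans hw2)
    have hgh : g2 ∘ h = ⇑eq1 ∘ α1 := funext fun i => by
      show (g2 ∘ h) i = eq1 (α1 i)
      rw [hfac1 i]; exact (heq1 (α1 i)).symm
    have hfh : f2 ∘ h = ⇑eq2 ∘ α2 := funext fun i => by
      show (f2 ∘ h) i = eq2 (α2 i)
      rw [hfac2 i]; exact (heq2 (α2 i)).symm
    have hs1 : Function.Surjective (g2 ∘ h) := hgh ▸ eq1.surjective.comp hα1
    have hs2 : Function.Surjective (f2 ∘ h) := hfh ▸ eq2.surjective.comp hα2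
    refine ⟨q, h, c, hh, hs1, hs2, ?_, ?_⟩
    · rw [A.map_congr hgh hs1 (eq1.surjective.comp hα1), ← A.map_map]
      exact heq1'
    · rw [A.map_congr hfh hs2 (eq2.surjective.comp hα2), ← A.map_map]
      exact heq2'
  · intro H P Y Z X p1 p2 f g hpb
    refine ⟨hat_comm A F hF p1 p2 f g hpb.1, ?_⟩
    intro u v huv
    obtain ⟨⟨m, ⟨yv, hyv⟩, a⟩, rfl⟩ := Quot.exists_rep u
    obtain ⟨⟨n, ⟨zv, hzv⟩, b⟩, rfl⟩ := Quot.exists_rep v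
    obtain ⟨k1, f1, x1, hf1, hx1, hfacf⟩ := exists_factorization (f ∘ yv)
    obtain ⟨k2, g1, x2, hg1, hx2, hfacg⟩ := exists_factorization (g ∘ zv)
    have E1 : F Y X f (hatMk A yv hyv a) = hatMk A x1 hx1 (A.map f1 hf1 a) :=
      hF _ _ f m k1 yv hyv a f1 hf1 x1 hx1 (fun i => hfacf i)
    have E2 : F Z X g (hatMk A zv hzv b) = hatMk A x2 hx2 (A.map g1 hg1 b) :=
      hF _ _ g n k2 zv hzv b g1 hg1 x2 hx2 (fun i => hfacg i)
    obtain ⟨e, he1, he2⟩ := hatMk_exact (E1.symm.trans (huv.trans E2))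
    have hf1' : Function.Surjective (⇑e ∘ f1) := e.surjective.comp hf1
    have hab : A.map (⇑e ∘ f1) hf1' a = A.map g1 hg1 b := by
      rw [← A.map_map f1 hf1 ⇑e e.surjective a]
      exact he2
    obtain ⟨p, g2, f2, hg2, hf2, hQpb⟩ := exists_fin_pullback (⇑e ∘ f1) g1 hf1' hg1
    obtain ⟨q, h, c, hh, hgh, hfh, hca, hcb⟩ :=
      H p m n k2 g2 f2 (⇑e ∘ f1) g1 hg2 hf2 hf1' hg1 hQpb a b hab
    have hcond : ∀ i : Fin q, f (yv (g2 (h i))) = g (zv (f2 (h i))) := by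
      intro i
      have h1 : f (yv (g2 (h i))) = x1 (f1 (g2 (h i))) := hfacf (g2 (h i))
      have h2 : g (zv (f2 (h i))) = x2 (g1 (f2 (h i))) := hfacg (f2 (h i))
      rw [h1, h2]
      exact (he1 (f1 (g2 (h i)))).symm.trans (congrArg x2 (hQpb.1 (h i)))
    have hPex : ∀ i : Fin q, ∃ w : P, p1 w = yv (g2 (h i)) ∧ p2 w = zv (f2 (h i)) :=
      fun i => (hpb.2 _ _ (hcond i)).exists
    choose pv hpv1 hpv2 using hPex
    have hpv : Function.Injective pv := by
      intro i j hij
      apply hh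
      have h1 : g2 (h i) = g2 (h j) := hyv (by rw [← hpv1 i, ← hpv1 j, hij])
      have h2 : f2 (h i) = f2 (h j) := hzv (by rw [← hpv2 i, ← hpv2 j, hij])
      exact ExistsUnique.unique (hQpb.2 (g2 (h j)) (f2 (h j)) (by rw [hQpb.1 (h j)]))
        ⟨h1, h2⟩ ⟨rfl, rfl⟩
    refine ⟨hatMk A pv hpv c, ?_, ?_⟩
    · have hstep := hF P Y p1 q m pv hpv c (g2 ∘ h) hgh yv hyv (fun i => hpv1 i)
      exact hstep.trans (congrArg (hatMk A yv hyv) hca)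
    · have hstep := hF P Z p2 q n pv hpv c (f2 ∘ h) hfh zv hzv (fun i => hpv2 i)
      exact hstep.trans (congrArg (hatMk A zv hzv) hcb)
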